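/- arXiv:2209.15530 — 4 statements merged into one kernel-verified Lean document; each statement's English description precedes it below -/
import Mathlib

section
/- Let m₁, …, m_ℓ be positive real numbers with ℓ ≥ 2 such that each m_j is at most (m₁ + ⋯ + m_ℓ)/2. Then there exist nonnegative real numbers μ_{jk} for 1 ≤ j < k ≤ ℓ such that for every index j: (∑_{i < j} μ_{ij}) + (∑_{k > j} μ_{jk}) = m_j. -/
open Finset

lemma key_ineq (n : ℕ) (m : Fin n → ℝ) (a S : ℝ) (ha0 : 0 ≤ a)
    (hm : ∀ k, 0 ≤ m k) (hS : ∑ k, m k = S - a) (ha2 : a ≤ S / 2)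
    (hmk : ∀ k, m k ≤ S / 2) :
    ∑ k, max 0 (m k + a - S / 2) ≤ a := by
  classical
  set P : Finset (Fin n) := univ.filter (fun k => 0 < m k + a - S / 2) with hP
  have hsplit : ∑ k, max 0 (m k + a - S / 2) = ∑ k ∈ P, (m k + a - S / 2) := by
    rw [← Finset.sum_filter_add_sum_filter_not univ (fun k => 0 < m k + a - S / 2)]
    have h1 : ∑ k ∈ univ.filter (fun k => ¬ 0 < m k + a - S / 2),
        max 0 (m k + a - S / 2) = 0 := by
      apply Finset.sum_eq_zero
      intro k hk
      simp only [mem_filter, not_lt] at hk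
      exact max_eq_left hk.2
    have h2 : ∑ k ∈ P, max 0 (m k + a - S / 2) = ∑ k ∈ P, (m k + a - S / 2) := by
      apply Finset.sum_congr rfl
      intro k hk
      simp only [hP, mem_filter] at hk
      exact max_eq_right hk.2.le
    rw [h1, h2, add_zero]
  rw [hsplit, Finset.sum_sub_distrib, Finset.sum_add_distrib, Finset.sum_const,
    Finset.sum_const, nsmul_eq_mul, nsmul_eq_mul]
  have hPm : ∑ k ∈ P, m k ≤ S - a := by
    rw [← hS]
    exact Finset.sum_le_sum_of_subset_of_nonneg (Finset.subset_univ P)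
      (fun k _ _ => hm k)
  rcases Nat.lt_or_ge P.card 2 with hp | hp
  · interval_cases h : P.card
    · simp only [Nat.cast_zero, zero_mul, add_zero, sub_zero]
      have : P = ∅ := Finset.card_eq_zero.mp h
      simp [this, ha0]
    · obtain ⟨k, hk⟩ := Finset.card_eq_one.mp h
      rw [hk]
      simp only [Finset.sum_singleton, Nat.cast_one, one_mul]
      have := hmk k
      linarith
  · have hp' : (2 : ℝ) ≤ (P.card : ℝ) := by exact_mod_cast hp
    nlinarith [hPm, ha2]

lemma aux_pairing (n : ℕ) (m : Fin n → ℝ)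
    (hm : ∀ j, 0 ≤ m j) (hhalf : ∀ j, m j ≤ (∑ i, m i) / 2) :
    ∃ μ : Fin n → Fin n → ℝ, (∀ j k, 0 ≤ μ j k) ∧
      ∀ j : Fin n,
        (∑ i ∈ Finset.univ.filter (fun i => i < j), μ i j) +
        (∑ k ∈ Finset.univ.filter (fun k => j < k), μ j k) = m j := by
  classical
  induction n with
  | zero => exact ⟨fun _ _ => 0, fun j => j.elim0, fun j => j.elim0⟩
  | succ n ih =>
    obtain ⟨S, hSdef⟩ : ∃ S, S = ∑ i, m i := ⟨_, rfl⟩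
    obtain ⟨a, hadef⟩ : ∃ a, a = m (Fin.last n) := ⟨_, rfl⟩
    have hsum : ∑ i : Fin n, m i.castSucc + a = S := by
      rw [hadef, hSdef, Fin.sum_univ_castSucc]
    have ha0 : 0 ≤ a := hadef ▸ hm _
    have ha2 : a ≤ S / 2 := by rw [hadef, hSdef]; exact hhalf _
    obtain ⟨L, hLdef⟩ : ∃ L : Fin n → ℝ,
        L = fun k => max 0 (m k.castSucc + a - S / 2) := ⟨_, rfl⟩
    have hLk : ∀ k, L k = max 0 (m k.castSucc + a - S / 2) := fun k => by rw [hLdef]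
    have hL0 : ∀ k, 0 ≤ L k := fun k => (hLk k) ▸ le_max_left _ _
    have hLm : ∀ k, L k ≤ m k.castSucc := fun k => by
      rw [hLk k]; exact max_le (hm _) (by linarith)
    have hLlb : ∀ k, m k.castSucc + a - S / 2 ≤ L k := fun k =>
      (hLk k) ▸ le_max_right _ _
    have hLa : ∑ k, L k ≤ a := by
      rw [hLdef]
      exact key_ineq n (fun k => m k.castSucc) a S ha0 (fun k => hm _)
        (by linarith) ha2 (fun k => by
          have := hhalf (Fin.castSucc k); rw [← hSdef] at this; exact this)
    have haM : a ≤ ∑ k : Fin n, m k.castSucc := by linarith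
    obtain ⟨D, hDdef⟩ : ∃ D, D = ∑ k : Fin n, (m k.castSucc - L k) := ⟨_, rfl⟩
    have hD : D = (∑ k : Fin n, m k.castSucc) - ∑ k, L k := by
      rw [hDdef, Finset.sum_sub_distrib]
    have hD0 : 0 ≤ D := by
      rw [hDdef]; apply Finset.sum_nonneg; intro k _; linarith [hLm k]
    obtain ⟨t, htdef⟩ : ∃ t, t = (a - ∑ k, L k) / D := ⟨_, rfl⟩
    have ht0 : 0 ≤ t := by
      rcases eq_or_lt_of_le hD0 with h | h
      · rw [htdef, ← h, div_zero]
      · rw [htdef]; exact div_nonneg (by linarith) hD0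
    have ht1 : t ≤ 1 := by
      rcases eq_or_lt_of_le hD0 with h | h
      · rw [htdef, ← h, div_zero]; norm_num
      · rw [htdef, div_le_one h]; linarith
    obtain ⟨c, hcdef⟩ : ∃ c : Fin n → ℝ,
        c = fun k => L k + t * (m k.castSucc - L k) := ⟨_, rfl⟩
    have hck : ∀ k, c k = L k + t * (m k.castSucc - L k) := fun k => by rw [hcdef]
    have hcL : ∀ k, L k ≤ c k := fun k => by
      have h1 : (0:ℝ) ≤ m k.castSucc - L k := by linarith [hLm k]
      have := mul_nonneg ht0 h1
      rw [hck k]; linarith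
    have hc0 : ∀ k, 0 ≤ c k := fun k => le_trans (hL0 k) (hcL k)
    have hcm : ∀ k, c k ≤ m k.castSucc := fun k => by
      have h1 : (0:ℝ) ≤ m k.castSucc - L k := by linarith [hLm k]
      have h2 := mul_le_of_le_one_left h1 ht1
      rw [hck k]; linarith
    have hcsum : ∑ k, c k = a := by
      have hstep : ∑ k, c k = (∑ k, L k) + t * D := by
        rw [hcdef, hDdef, Finset.sum_add_distrib, Finset.mul_sum]
      rw [hstep]
      rcases eq_or_lt_of_le hD0 with h | h
      · have hLe : ∑ k, L k = a := by linarith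
        rw [← h, mul_zero, add_zero, hLe]
      · rw [htdef, div_mul_cancel₀ _ (ne_of_gt h)]; ring
    obtain ⟨m', hm'def⟩ : ∃ m' : Fin n → ℝ,
        m' = fun k => m k.castSucc - c k := ⟨_, rfl⟩
    have hm'k : ∀ k, m' k = m k.castSucc - c k := fun k => by rw [hm'def]
    have hm'0 : ∀ k, 0 ≤ m' k := fun k => by
      rw [hm'k k]; linarith [hcm k]
    have hsum' : ∑ k, m' k = S - 2 * a := by
      rw [hm'def, Finset.sum_sub_distrib, hcsum]; linarith
    have hhalf' : ∀ k, m' k ≤ (∑ i, m' i) / 2 := by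
      intro k
      rw [hsum', hm'k k]
      have h1 := hLlb k
      have h2 := hcL k
      linarith
    obtain ⟨μ', hμ'0, hμ'⟩ := ih m' hm'0 hhalf'
    have hne : ∀ i : Fin n, i.castSucc ≠ Fin.last n := fun i => (Fin.castSucc_lt_last i).ne
    refine ⟨fun j k =>
      if hj : j = Fin.last n then 0
      else if hk : k = Fin.last n then c (j.castPred hj)
      else μ' (j.castPred hj) (k.castPred hk), ?_, ?_⟩
    · intro j k
      dsimp only
      split_ifs
      · exact le_refl 0
      · exact hc0 _
      · exact hμ'0 _ _
    · intro j
      induction j using Fin.lastCases with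
      | last =>
        rw [Finset.sum_filter, Finset.sum_filter, Fin.sum_univ_castSucc,
          Fin.sum_univ_castSucc]
        have hnl : ∀ i : Fin n, ¬ Fin.last n < i.castSucc := fun i =>
          not_lt_of_gt (Fin.castSucc_lt_last i)
        simp only [Fin.castSucc_lt_last, if_true, lt_irrefl, if_false,
          dif_pos rfl, dif_neg (hne _), dite_true, Fin.castPred_castSucc, add_zero,
          hnl, Finset.sum_const_zero]
        rw [hcsum, hadef]
      | cast j' =>
        rw [Finset.sum_filter, Finset.sum_filter, Fin.sum_univ_castSucc,
          Fin.sum_univ_castSucc]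
        have h1 : ¬ Fin.last n < j'.castSucc := not_lt_of_gt (Fin.castSucc_lt_last j')
        simp only [Fin.castSucc_lt_castSucc_iff, h1, if_false, add_zero,
          Fin.castSucc_lt_last, if_true, dif_neg (hne _), dif_pos rfl,
          dite_true, Fin.castPred_castSucc]
        have heq := hμ' j'
        rw [Finset.sum_filter, Finset.sum_filter, hm'k j'] at heq
        linarith

/-- **Linear programming core of the structural factorisation.**
If `m₁, …, m_ℓ > 0` (with `ℓ ≥ 2`) and each `m_j ≤ (∑ m_i)/2`, then there exist nonnegative
`μ_{jk}` (for `j < k`) with `∑_{i<j} μ_{ij} + ∑_{k>j} μ_{jk} = m_j` for every `j`. -/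
theorem exists_pairing_weights (ℓ : ℕ) (hℓ : 2 ≤ ℓ) (m : Fin ℓ → ℝ)
    (hm : ∀ j, 0 < m j) (hhalf : ∀ j, m j ≤ (∑ i, m i) / 2) :
    ∃ μ : Fin ℓ → Fin ℓ → ℝ, (∀ j k, 0 ≤ μ j k) ∧
      ∀ j : Fin ℓ,
        (∑ i ∈ Finset.univ.filter (fun i => i < j), μ i j) +
        (∑ k ∈ Finset.univ.filter (fun k => j < k), μ j k) = m j :=
  aux_pairing ℓ m (fun j => (hm j).le) hhalf
end

section
/- (Farkas' lemma) Let M be an m × n real matrix and b ∈ ℝ^m. Then exactly one of the following holds: (i) there exists x ∈ ℝ^n with all components nonnegative such that M x = b; (ii) there exists y ∈ ℝ^m such that every component of Mᵀ y is nonnegative and b · y < 0. -/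
/-!
If `b` lies outside the cone `{M x | x ≥ 0}`, the hyperplane separation theorem for closed convex
cones yields `y` with `Mᵀ y ≥ 0` and `b ⬝ᵥ y < 0`; the two alternatives exclude each other because
`b ⬝ᵥ y = x ⬝ᵥ Mᵀ y ≥ 0` whenever `b = M x` with `x ≥ 0`.

The substance is that this cone is closed. By Carathéodory's theorem for cones, every nonnegative
combination of the columns is a nonnegative combination of linearly independent columns, so the
cone is a finite union of images of orthants under injective linear maps, which are closed
embeddings since their domains are finite-dimensional.
-/

open Matrix Finset

section ConicCaratheodory

variable {ι E : Type*} [Fintype ι] [AddCommGroup E] [Module ℝ E]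

theorem exists_nonneg_sub_smul_eq_zero {c w : ι → ℝ} (hc : 0 ≤ c) (hw : ∃ i, 0 < w i) :
    ∃ r : ℝ, 0 ≤ c - r • w ∧ ∃ i, 0 < w i ∧ (c - r • w) i = 0 := by
  obtain ⟨i₀, hi₀, hmin⟩ := ({i | 0 < w i} : Finset ι).exists_min_image (fun i => c i / w i)
    (by simpa [Finset.Nonempty] using hw)
  simp only [mem_filter, mem_univ, true_and] at hi₀ hmin
  refine ⟨c i₀ / w i₀, fun i => ?_, i₀, hi₀, by simp [div_mul_cancel₀ _ hi₀.ne']⟩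
  rw [Pi.zero_apply, Pi.sub_apply, Pi.smul_apply, smul_eq_mul, sub_nonneg]
  rcases lt_or_ge 0 (w i) with hwi | hwi
  · exact (le_div_iff₀ hwi).1 (hmin i hwi)
  · exact (mul_nonpos_of_nonneg_of_nonpos (div_nonneg (hc i₀) hi₀.le) hwi).trans (hc i)

theorem exists_nonneg_sub_smul_eq_zero_of_ne_zero {c w : ι → ℝ} (hc : 0 ≤ c) (hw : w ≠ 0) :
    ∃ r : ℝ, 0 ≤ c - r • w ∧ ∃ i, w i ≠ 0 ∧ (c - r • w) i = 0 := by
  obtain ⟨i, hi⟩ := Function.ne_iff.1 hw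
  rcases hi.lt_or_gt with hneg | hpos
  · obtain ⟨r, hr, j, hj, hcj⟩ := exists_nonneg_sub_smul_eq_zero (w := -w) hc ⟨i, by simpa⟩
    exact ⟨-r, by simpa using hr, j, by simpa using hj.ne', by simpa using hcj⟩
  · obtain ⟨r, hr, j, hj, hcj⟩ := exists_nonneg_sub_smul_eq_zero hc ⟨i, hpos⟩
    exact ⟨r, hr, j, hj.ne', hcj⟩

theorem Fintype.linearCombination_subtype_eq (v : ι → E) {t : Finset ι} {c : ι → ℝ}
    {d : t → ℝ} (hd : ∀ i : t, c i = d i) (hc : ∀ i ∉ t, c i = 0) :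
    Fintype.linearCombination ℝ (fun i : t => v i) d = Fintype.linearCombination ℝ v c := by
  simp only [Fintype.linearCombination_apply]
  exact Fintype.sum_of_injective _ Subtype.val_injective _ _
    (fun i hi => by rw [hc i (by simpa using hi), zero_smul]) (fun i => by rw [hd])

theorem exists_linearIndependent_mem_image_Ici (v : ι → E) {c : ι → ℝ} (hc : 0 ≤ c) :
    ∃ t : Finset ι, LinearIndependent ℝ (fun i : t => v i) ∧
      Fintype.linearCombination ℝ v c ∈
        Fintype.linearCombination ℝ (fun i : t => v i) '' Set.Ici 0 := by
  classical
  induction h : #{i | c i ≠ 0} using Nat.strong_induction_on generalizing c with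
  | _ k ih =>
  set t : Finset ι := {i | c i ≠ 0}
  have hct : ∀ i ∉ t, c i = 0 := by simp [t]
  by_cases hli : LinearIndependent ℝ (fun i : t => v i)
  · exact ⟨t, hli, fun i => c i, fun i => hc i,
      Fintype.linearCombination_subtype_eq v (fun _ => rfl) hct⟩
  -- Subtracting a suitable multiple of a linear relation among the vectors of the support
  -- keeps the coefficients nonnegative and kills one of them.
  obtain ⟨g, hg, i, hi⟩ := Fintype.not_linearIndependent_iff.1 hli
  set w : ι → ℝ := fun i => if h : i ∈ t then g ⟨i, h⟩ else 0
  have hwt : ∀ i ∉ t, w i = 0 := fun i hi => dif_neg hi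
  have hw : Fintype.linearCombination ℝ v w = 0 := by
    rw [← hg, ← Fintype.linearCombination_apply]
    exact (Fintype.linearCombination_subtype_eq v (fun i => dif_pos i.2) hwt).symm
  have hw0 : w ≠ 0 := Function.ne_iff.2 ⟨i, by simpa [w] using hi⟩
  obtain ⟨r, hr, i₀, hwi₀, hci₀⟩ := exists_nonneg_sub_smul_eq_zero_of_ne_zero hc hw0
  have hsupp : ({i | (c - r • w) i ≠ 0} : Finset ι) ⊆ t.erase i₀ := by
    intro i
    simp only [mem_filter, mem_univ, true_and, mem_erase]
    refine fun hi => ⟨fun hii₀ => hi (hii₀ ▸ hci₀), by_contra fun hit => hi ?_⟩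
    rw [Pi.sub_apply, Pi.smul_apply, hct i hit, hwt i hit, smul_zero, sub_zero]
  have hlt : #{i | (c - r • w) i ≠ 0} < k := by
    rw [← h]
    have hi₀t : i₀ ∈ t := by_contra fun h' => hwi₀ (hwt _ h')
    exact (card_le_card hsupp).trans_lt (card_erase_lt_of_mem hi₀t)
  simpa [hw] using ih _ hlt hr rfl

end ConicCaratheodory

section Closed

variable {ι E : Type*} [Fintype ι] [AddCommGroup E] [Module ℝ E] [TopologicalSpace E]
  [IsTopologicalAddGroup E] [ContinuousSMul ℝ E] [T2Space E]

theorem LinearIndependent.isClosed_image_Ici {v : ι → E} (hv : LinearIndependent ℝ v) :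
    IsClosed (Fintype.linearCombination ℝ v '' Set.Ici 0) :=
  (LinearMap.isClosedEmbedding_of_injective (LinearMap.ker_eq_bot.2
    (linearIndependent_iff_injective_fintypeLinearCombination.1 hv))).isClosedMap _ isClosed_Ici

theorem isClosed_image_Ici_fintypeLinearCombination (v : ι → E) :
    IsClosed (Fintype.linearCombination ℝ v '' Set.Ici 0) := by
  classical
  have hunion : Fintype.linearCombination ℝ v '' Set.Ici 0 =
      ⋃ t ∈ {t : Finset ι | LinearIndependent ℝ (fun i : t => v i)},
        Fintype.linearCombination ℝ (fun i : t => v i) '' Set.Ici 0 := by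
    refine subset_antisymm ?_ (Set.iUnion₂_subset fun t _ => ?_)
    · rintro _ ⟨c, hc, rfl⟩
      simpa using exists_linearIndependent_mem_image_Ici v hc
    · rintro _ ⟨d, hd, rfl⟩
      refine ⟨fun i => if h : i ∈ t then d ⟨i, h⟩ else 0, fun i => ?_,
        (Fintype.linearCombination_subtype_eq v (fun i => dif_pos i.2) fun i hi => dif_neg hi).symm⟩
      by_cases h : i ∈ t
      · simpa [h] using hd ⟨i, h⟩
      · simp [h]
  rw [hunion]
  exact (Set.toFinite _).isClosed_biUnion fun t ht => ht.isClosed_image_Ici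

theorem LinearMap.isClosed_image_Ici (L : (ι → ℝ) →ₗ[ℝ] E) : IsClosed (L '' Set.Ici 0) := by
  classical
  have hL : L = Fintype.linearCombination ℝ (fun i => L (Pi.single i 1)) := by
    ext i
    simp
  rw [hL]
  exact isClosed_image_Ici_fintypeLinearCombination _

end Closed

theorem exists_dotProduct_neg_of_notMem {ι : Type*} [Fintype ι] (C : ProperCone ℝ (ι → ℝ))
    {b : ι → ℝ} (hb : b ∉ C) : ∃ y : ι → ℝ, (∀ z ∈ C, 0 ≤ z ⬝ᵥ y) ∧ b ⬝ᵥ y < 0 := by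
  classical
  obtain ⟨f, hfC, hfb⟩ := C.hyperplane_separation_point hb
  have hf : ∀ z, f z = z ⬝ᵥ fun i => f (Pi.single i 1) := by
    intro z
    conv_lhs => rw [← Finset.univ_sum_single z]
    simp only [map_sum, dotProduct]
    refine Finset.sum_congr rfl fun i _ => ?_
    rw [← smul_eq_mul, ← map_smul, ← Pi.single_smul', smul_eq_mul, mul_one]
  exact ⟨_, fun z hz => hf z ▸ hfC z hz, hf b ▸ hfb⟩

theorem Matrix.exists_nonneg_transpose_mulVec_of_notMem {m n : Type*} [Fintype m] [Fintype n]
    (M : Matrix m n ℝ) {b : m → ℝ} (hb : b ∉ M.mulVecLin '' Set.Ici 0) :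
    ∃ y : m → ℝ, 0 ≤ Mᵀ *ᵥ y ∧ b ⬝ᵥ y < 0 := by
  classical
  let C : ProperCone ℝ (m → ℝ) :=
    ⟨(PointedCone.positive ℝ (n → ℝ)).map M.mulVecLin, M.mulVecLin.isClosed_image_Ici⟩
  obtain ⟨y, hyC, hby⟩ := exists_dotProduct_neg_of_notMem C hb
  refine ⟨y, fun j => ?_, hby⟩
  have hj := hyC (M *ᵥ Pi.single j 1) ⟨Pi.single j 1, by simp, rfl⟩
  rwa [dotProduct_comm, dotProduct_mulVec, dotProduct_single, mul_one, ← mulVec_transpose] at hj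

/-- **Farkas' lemma.** For a real `m × n` matrix `M` and `b ∈ ℝ^m`, exactly one of the
following holds: (i) `Mx = b` has a componentwise-nonnegative solution `x`;
(ii) there is `y ∈ ℝ^m` with `Mᵀy ≥ 0` componentwise and `b · y < 0`. -/
theorem farkas_lemma (m n : ℕ) (M : Matrix (Fin m) (Fin n) ℝ) (b : Fin m → ℝ) :
    Xor' (∃ x : Fin n → ℝ, (∀ i, 0 ≤ x i) ∧ M.mulVec x = b)
      (∃ y : Fin m → ℝ, (∀ j, 0 ≤ Mᵀ.mulVec y j) ∧ b ⬝ᵥ y < 0) := by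
  refine (xor_iff_or_and_not_and _ _).2 ⟨or_iff_not_imp_left.2 fun hx => ?_, ?_⟩
  · exact M.exists_nonneg_transpose_mulVec_of_notMem hx
  · rintro ⟨⟨x, hx, rfl⟩, y, hy, hby⟩
    rw [dotProduct_comm, dotProduct_mulVec, ← mulVec_transpose] at hby
    exact hby.not_ge (dotProduct_nonneg_of_nonneg hy hx)
end

section
/- Let P(s,t) = ∑_{k=0}^d c_k s^k t^{d-k} be a homogeneous polynomial of degree d in ℂ[s,t], and define the SL(2,ℂ) action (σ̃_N P)(s,t) = P(Nᵀ(s,t)). Then there exists a one-parameter algebraic subgroup λ ↦ N_λ of SL(2,ℂ) with lim_{λ→0} σ̃_{N_λ} P = 0 (coefficientwise) if and only if P has a linear factor over ℂ of multiplicity strictly greater than d/2. -/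
open MvPolynomial

/-- The action of a `2×2` matrix `N` on binary forms: `(σ̃_N P)(s,t) = P(Nᵀ(s,t))`. -/
noncomputable def sigmaTilde (N : Matrix (Fin 2) (Fin 2) ℂ)
    (P : MvPolynomial (Fin 2) ℂ) : MvPolynomial (Fin 2) ℂ :=
  aeval (fun i : Fin 2 => C (N 0 i) * X 0 + C (N 1 i) * X 1) P

/-- The one-parameter algebraic subgroup `λ ↦ G diag(λ^a, λ^{-a}) G⁻¹` of `SL(2,ℂ)`. -/
noncomputable def oneParam (G : Matrix (Fin 2) (Fin 2) ℂ) (a : ℤ) (l : ℂ) :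
    Matrix (Fin 2) (Fin 2) ℂ :=
  G * Matrix.diagonal ![l ^ a, l ^ (-a)] * G⁻¹

/-!
Conjugating by `G`, the subgroup `oneParam G a` acts on `Q = σ̃_{G⁻¹} P` diagonally, multiplying
the coefficient of `s^j t^k` by `λ^{a(j-k)}`; as `σ̃_G` is a fixed linear map on forms of degree
`d`, `σ̃_{N_λ} P → 0` iff `σ̃_{diag(λ^a, λ^{-a})} Q → 0`. Since `j + k = d` for every monomial of
`Q`, this happens exactly when every monomial has `a(j - k) > 0`, i.e. (for `a > 0`, say) when
`s` occurs in each monomial to a power `> d/2`: `s^m ∣ Q` with `2m > d`. Transporting back by `G`,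
`s` becomes the linear form given by the first column of `G`, and any nonzero linear form is the
first column of some `G ∈ SL(2,ℂ)`.
-/

open Filter Topology

theorem tendsto_mul_zpow_nhdsNE_zero_iff {𝕜 : Type*} [NontriviallyNormedField 𝕜] {c : 𝕜}
    {e : ℤ} : Tendsto (fun l : 𝕜 => c * l ^ e) (𝓝[≠] 0) (𝓝 0) ↔ c = 0 ∨ 0 < e := by
  constructor
  · intro h
    refine or_iff_not_imp_right.2 fun he => ?_
    -- for `e ≤ 0`, `c = (c * l ^ e) * l ^ (-e)` tends to `0 * 0 ^ (-e) = 0`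
    obtain ⟨k, hk⟩ : ∃ k : ℕ, -e = k := ⟨(-e).toNat, by omega⟩
    have hc : Tendsto (fun l : 𝕜 => c * l ^ e * l ^ k) (𝓝[≠] 0) (𝓝 (0 * 0 ^ k)) :=
      h.mul ((continuous_pow k).tendsto 0 |>.mono_left nhdsWithin_le_nhds)
    rw [zero_mul] at hc
    refine tendsto_nhds_unique (tendsto_const_nhds.congr' ?_) hc
    filter_upwards [self_mem_nhdsWithin] with l hl
    rw [mul_assoc, ← zpow_natCast, ← hk, ← zpow_add₀ hl, add_neg_cancel, zpow_zero, mul_one]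
  · rintro (rfl | he)
    · simp
    · lift e to ℕ using he.le
      have hcont : Tendsto (fun l : 𝕜 => c * l ^ e) (𝓝 0) (𝓝 (c * 0 ^ e)) :=
        ((continuous_pow e).const_mul c).tendsto 0
      rw [zero_pow (by exact_mod_cast he.ne'), mul_zero] at hcont
      simpa using hcont.mono_left nhdsWithin_le_nhds

theorem zpow_pow_mul_zpow_neg_pow {𝕜 : Type*} [Field 𝕜] {l : 𝕜} (hl : l ≠ 0) (a : ℤ)
    (j k : ℕ) : (l ^ a) ^ j * (l ^ (-a)) ^ k = l ^ (a * ((j : ℤ) - k)) := by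
  rw [← zpow_natCast, ← zpow_natCast, ← zpow_mul, ← zpow_mul, ← zpow_add₀ hl]
  ring_nf

theorem Matrix.exists_det_eq_one_col_zero_eq {K : Type*} [Field K] {u v : K}
    (h : (u, v) ≠ (0, 0)) : ∃ G : Matrix (Fin 2) (Fin 2) K, G.det = 1 ∧ G 0 0 = u ∧ G 1 0 = v := by
  rcases eq_or_ne u 0 with rfl | hu
  · have hv : v ≠ 0 := by rintro rfl; exact h rfl
    exact ⟨!![0, -v⁻¹; v, 0], by simp [Matrix.det_fin_two, hv], rfl, rfl⟩
  · exact ⟨!![u, 0; v, u⁻¹], by simp [Matrix.det_fin_two, hu], rfl, rfl⟩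

theorem MvPolynomial.X_pow_dvd_iff {σ R : Type*} [CommSemiring R] {i : σ} {t : ℕ}
    {p : MvPolynomial σ R} : X i ^ t ∣ p ↔ ∀ n ∈ p.support, t ≤ n i := by
  rw [← Ideal.mem_span_singleton, X_pow_eq_monomial,
    ← Set.image_singleton (f := fun s => monomial s (1 : R)), mem_ideal_span_monomial_image]
  simp [Finsupp.single_le_iff]

theorem MvPolynomial.tendsto_coeff_map_of_support_subset {α σ τ R : Type*} [CommSemiring R]
    [TopologicalSpace R] [IsTopologicalSemiring R] {F : Filter α}
    (f : MvPolynomial σ R →ₗ[R] MvPolynomial τ R) {s : Finset (σ →₀ ℕ)}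
    {p : α → MvPolynomial σ R} (hs : ∀ l, (p l).support ⊆ s)
    (hp : ∀ n, Tendsto (fun l => (p l).coeff n) F (𝓝 0)) (m : τ →₀ ℕ) :
    Tendsto (fun l => (f (p l)).coeff m) F (𝓝 0) := by
  have hsum : ∀ l,
      (f (p l)).coeff m = ∑ n ∈ s, (p l).coeff n * (f (monomial n 1)).coeff m := by
    intro l
    conv_lhs => rw [(p l).as_sum, Finset.sum_subset (hs l) (fun n _ hn => by
      rw [notMem_support_iff.mp hn, monomial_zero])]
    simp only [map_sum, coeff_sum]
    refine Finset.sum_congr rfl fun n _ => ?_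
    rw [show monomial n ((p l).coeff n) = (p l).coeff n • monomial n 1 by
      rw [smul_monomial, smul_eq_mul, mul_one], map_smul, coeff_smul, smul_eq_mul]
  simpa [hsum] using tendsto_finsetSum s fun n _ => (hp n).mul_const ((f (monomial n 1)).coeff m)

theorem MvPolynomial.tendsto_coeff_map_of_isHomogeneous {α σ τ R : Type*} [CommSemiring R]
    [TopologicalSpace R] [IsTopologicalSemiring R] [Finite σ] {F : Filter α}
    (f : MvPolynomial σ R →ₗ[R] MvPolynomial τ R) {d : ℕ}
    {p : α → MvPolynomial σ R} (hd : ∀ l, (p l).IsHomogeneous d)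
    (hp : ∀ n, Tendsto (fun l => (p l).coeff n) F (𝓝 0)) (m : τ →₀ ℕ) :
    Tendsto (fun l => (f (p l)).coeff m) F (𝓝 0) :=
  tendsto_coeff_map_of_support_subset f (s := (Finsupp.finite_of_degree_eq d).toFinset)
    (fun l n hn => by
      simpa using not_imp_comm.mp (hd l).coeff_eq_zero (mem_support_iff.mp hn)) hp m

theorem MvPolynomial.IsHomogeneous.add_eq_of_mem_support {R : Type*} [CommSemiring R]
    {Q : MvPolynomial (Fin 2) R} {d : ℕ} (hQ : Q.IsHomogeneous d) {n : Fin 2 →₀ ℕ}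
    (hn : n ∈ Q.support) : n 0 + n 1 = d := by
  simpa [Finsupp.degree_eq_sum, Fin.sum_univ_two] using
    not_imp_comm.mp hQ.coeff_eq_zero (mem_support_iff.mp hn)

theorem MvPolynomial.IsHomogeneous.exists_forall_mem_support_lt_two_mul {R : Type*}
    [CommSemiring R]    {Q : MvPolynomial (Fin 2) R} {d : ℕ} (hQ : Q.IsHomogeneous d) {a : ℤ}
    (h : ∀ n ∈ Q.support, 0 < a * ((n 0 : ℤ) - n 1)) : ∃ i, ∀ n ∈ Q.support, d < 2 * n i := by
  by_cases ha : 0 < a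
  · refine ⟨0, fun n hn => ?_⟩
    have := (pos_iff_pos_of_mul_pos (h n hn)).1 ha
    have := hQ.add_eq_of_mem_support hn
    omega
  · refine ⟨1, fun n hn => ?_⟩
    have := neg_of_mul_pos_right (h n hn) (not_lt.1 ha)
    have := hQ.add_eq_of_mem_support hn
    omega

noncomputable def sigmaTildeAlgHom (N : Matrix (Fin 2) (Fin 2) ℂ) :
    MvPolynomial (Fin 2) ℂ →ₐ[ℂ] MvPolynomial (Fin 2) ℂ :=
  aeval fun i => C (N 0 i) * X 0 + C (N 1 i) * X 1

theorem sigmaTildeAlgHom_apply (N : Matrix (Fin 2) (Fin 2) ℂ) (P : MvPolynomial (Fin 2) ℂ) :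
    sigmaTildeAlgHom N P = sigmaTilde N P :=
  rfl

theorem sigmaTilde_X (N : Matrix (Fin 2) (Fin 2) ℂ) (i : Fin 2) :
    sigmaTilde N (X i) = C (N 0 i) * X 0 + C (N 1 i) * X 1 :=
  aeval_X _ i

theorem sigmaTildeAlgHom_mul (N M : Matrix (Fin 2) (Fin 2) ℂ) :
    sigmaTildeAlgHom (N * M) = (sigmaTildeAlgHom N).comp (sigmaTildeAlgHom M) := by
  ext i : 1
  simp [sigmaTildeAlgHom, Matrix.mul_apply, Fin.sum_univ_two]
  ring

theorem sigmaTildeAlgHom_one : sigmaTildeAlgHom 1 = AlgHom.id ℂ (MvPolynomial (Fin 2) ℂ) := by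
  ext i : 1
  fin_cases i <;> simp [sigmaTildeAlgHom]

theorem sigmaTilde_sigmaTilde (N M : Matrix (Fin 2) (Fin 2) ℂ) (P : MvPolynomial (Fin 2) ℂ) :
    sigmaTilde N (sigmaTilde M P) = sigmaTilde (N * M) P := by
  simp [← sigmaTildeAlgHom_apply, sigmaTildeAlgHom_mul]

theorem sigmaTilde_one (P : MvPolynomial (Fin 2) ℂ) : sigmaTilde 1 P = P := by
  simp [← sigmaTildeAlgHom_apply, sigmaTildeAlgHom_one]

theorem sigmaTilde_dvd_sigmaTilde (N : Matrix (Fin 2) (Fin 2) ℂ) {P Q : MvPolynomial (Fin 2) ℂ}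
    (h : P ∣ Q) : sigmaTilde N P ∣ sigmaTilde N Q :=
  map_dvd (sigmaTildeAlgHom N) h

theorem sigmaTilde_pow (N : Matrix (Fin 2) (Fin 2) ℂ) (P : MvPolynomial (Fin 2) ℂ) (k : ℕ) :
    sigmaTilde N (P ^ k) = sigmaTilde N P ^ k :=
  map_pow (sigmaTildeAlgHom N) P k

theorem MvPolynomial.IsHomogeneous.sigmaTilde {d : ℕ} {P : MvPolynomial (Fin 2) ℂ}
    (hP : P.IsHomogeneous d) (N : Matrix (Fin 2) (Fin 2) ℂ) :
    (sigmaTilde N P).IsHomogeneous d := by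
  have h := hP.aeval (fun i => (C (N 0 i) * X 0 + C (N 1 i) * X 1 : MvPolynomial (Fin 2) ℂ))
    fun i => (isHomogeneous_C_mul_X (N 0 i) 0).add (isHomogeneous_C_mul_X (N 1 i) 1)
  rw [one_mul] at h
  exact h

theorem sigmaTilde_diagonal_monomial (x y : ℂ) (n : Fin 2 →₀ ℕ) (c : ℂ) :
    sigmaTilde (Matrix.diagonal ![x, y]) (monomial n c) =
      monomial n (c * x ^ n 0 * y ^ n 1) := by
  rw [sigmaTilde, aeval_monomial, Finsupp.prod_fintype _ _ fun _ => pow_zero _, Fin.prod_univ_two,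
    monomial_eq, Finsupp.prod_fintype _ _ fun _ => pow_zero _, Fin.prod_univ_two]
  simp [Matrix.diagonal_apply_ne, mul_pow]
  ring

theorem coeff_sigmaTilde_diagonal (x y : ℂ) (P : MvPolynomial (Fin 2) ℂ) (n : Fin 2 →₀ ℕ) :
    (sigmaTilde (Matrix.diagonal ![x, y]) P).coeff n = P.coeff n * x ^ n 0 * y ^ n 1 := by
  induction P using MvPolynomial.induction_on' with
  | monomial m c =>
    rw [sigmaTilde_diagonal_monomial, coeff_monomial, coeff_monomial]
    split_ifs with h
    · rw [h]
    · ring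
  | add p q hp hq =>
    simp only [← sigmaTildeAlgHom_apply] at hp hq ⊢
    rw [map_add, coeff_add, hp, hq, coeff_add]
    ring

theorem tendsto_coeff_sigmaTilde_diagonal_iff (a : ℤ) (Q : MvPolynomial (Fin 2) ℂ) :
    (∀ n, Tendsto (fun l : ℂ => (sigmaTilde (Matrix.diagonal ![l ^ a, l ^ (-a)]) Q).coeff n)
      (𝓝[≠] 0) (𝓝 0)) ↔ ∀ n ∈ Q.support, 0 < a * ((n 0 : ℤ) - n 1) := by
  have hcoeff : ∀ n, (fun l : ℂ => (sigmaTilde (Matrix.diagonal ![l ^ a, l ^ (-a)]) Q).coeff n)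
      =ᶠ[𝓝[≠] 0] fun l => Q.coeff n * l ^ (a * ((n 0 : ℤ) - n 1)) := by
    intro n
    filter_upwards [self_mem_nhdsWithin] with l hl
    rw [coeff_sigmaTilde_diagonal, mul_assoc, zpow_pow_mul_zpow_neg_pow hl]
  simp only [tendsto_congr' (hcoeff _), tendsto_mul_zpow_nhdsNE_zero_iff, mem_support_iff,
    or_iff_not_imp_left]

theorem sigmaTilde_oneParam {G : Matrix (Fin 2) (Fin 2) ℂ} (a : ℤ) (l : ℂ)
    (P : MvPolynomial (Fin 2) ℂ) :
    sigmaTilde (oneParam G a l) P =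
      sigmaTilde G (sigmaTilde (Matrix.diagonal ![l ^ a, l ^ (-a)]) (sigmaTilde G⁻¹ P)) := by
  rw [sigmaTilde_sigmaTilde, sigmaTilde_sigmaTilde, oneParam, Matrix.mul_assoc]

theorem tendsto_coeff_sigmaTilde_oneParam_iff {G : Matrix (Fin 2) (Fin 2) ℂ} (hG : IsUnit G.det)
    (a : ℤ) {d : ℕ} {P : MvPolynomial (Fin 2) ℂ} (hP : P.IsHomogeneous d) {F : Filter ℂ} :
    (∀ m, Tendsto (fun l => (sigmaTilde (oneParam G a l) P).coeff m) F (𝓝 0)) ↔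
      ∀ n, Tendsto (fun l => (sigmaTilde (Matrix.diagonal ![l ^ a, l ^ (-a)])
        (sigmaTilde G⁻¹ P)).coeff n) F (𝓝 0) := by
  have hcancel : ∀ Q, sigmaTilde G⁻¹ (sigmaTilde G Q) = Q := fun Q => by
    rw [sigmaTilde_sigmaTilde, Matrix.nonsing_inv_mul _ hG, sigmaTilde_one]
  simp only [sigmaTilde_oneParam]
  constructor
  · intro h n
    have := tendsto_coeff_map_of_isHomogeneous (sigmaTildeAlgHom G⁻¹).toLinearMap
      (fun l => ((hP.sigmaTilde _).sigmaTilde _).sigmaTilde _) h n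
    simpa only [AlgHom.toLinearMap_apply, sigmaTildeAlgHom_apply, hcancel] using this
  · exact tendsto_coeff_map_of_isHomogeneous (sigmaTildeAlgHom G).toLinearMap
      fun l => (hP.sigmaTilde _).sigmaTilde _

/-- **Hilbert–Mumford instability of binary forms.** A homogeneous binary form `P` of degree `d`
is destabilised by some one-parameter subgroup of `SL(2,ℂ)` (i.e. `σ̃_{N_λ} P → 0`
coefficientwise as `λ → 0`) if and only if `P` has a linear factor of multiplicity `> d/2`. -/
theorem binary_form_unstable_iff (d : ℕ) (P : MvPolynomial (Fin 2) ℂ)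
    (hP : P.IsHomogeneous d) :
    (∃ G : Matrix (Fin 2) (Fin 2) ℂ, G.det = 1 ∧ ∃ a : ℤ,
      ∀ m : Fin 2 →₀ ℕ,
        Filter.Tendsto (fun l : ℂ => (sigmaTilde (oneParam G a l) P).coeff m)
          (nhdsWithin 0 {(0 : ℂ)}ᶜ) (nhds 0)) ↔
    ∃ u v : ℂ, (u, v) ≠ (0, 0) ∧ ∃ m : ℕ, (d : ℝ) / 2 < (m : ℝ) ∧
      (C u * X 0 + C v * X 1) ^ m ∣ P := by
  constructor
  · rintro ⟨G, hdet, a, h⟩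
    have hG : IsUnit G.det := by simp [hdet]
    obtain ⟨i, hi⟩ := (hP.sigmaTilde G⁻¹).exists_forall_mem_support_lt_two_mul
      ((tendsto_coeff_sigmaTilde_diagonal_iff a _).1
        ((tendsto_coeff_sigmaTilde_oneParam_iff hG a hP).1 h))
    refine ⟨G 0 i, G 1 i, fun hcol => ?_, d / 2 + 1, ?_, ?_⟩
    · simp only [Prod.ext_iff] at hcol
      exact hG.ne_zero (Matrix.det_eq_zero_of_column_eq_zero i (Fin.forall_fin_two.2 hcol))
    · have : (d : ℝ) < 2 * ((d / 2 + 1 : ℕ) : ℝ) := by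
        exact_mod_cast (by omega : d < 2 * (d / 2 + 1))
      linarith
    · have := sigmaTilde_dvd_sigmaTilde G
        (X_pow_dvd_iff.2 fun n hn => (by have := hi n hn; omega : d / 2 + 1 ≤ n i))
      rwa [sigmaTilde_pow, sigmaTilde_X, sigmaTilde_sigmaTilde, Matrix.mul_nonsing_inv _ hG,
        sigmaTilde_one] at this
  · rintro ⟨u, v, huv, m, hm, hdvd⟩
    obtain ⟨G, hdet, rfl, rfl⟩ := Matrix.exists_det_eq_one_col_zero_eq huv
    have hG : IsUnit G.det := by simp [hdet]
    have hX : X 0 ^ m ∣ sigmaTilde G⁻¹ P := by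
      have := sigmaTilde_dvd_sigmaTilde G⁻¹ hdvd
      rwa [← sigmaTilde_X, ← sigmaTilde_pow, sigmaTilde_sigmaTilde, Matrix.nonsing_inv_mul _ hG,
        sigmaTilde_one] at this
    have hdm : d < 2 * m := by exact_mod_cast (by linarith : (d : ℝ) < 2 * m)
    refine ⟨G, hdet, 1, (tendsto_coeff_sigmaTilde_oneParam_iff hG 1 hP).2
      ((tendsto_coeff_sigmaTilde_diagonal_iff 1 _).2 fun n hn => ?_)⟩
    have := X_pow_dvd_iff.1 hX n hn
    have := (hP.sigmaTilde G⁻¹).add_eq_of_mem_support hn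
    omega
end

section
/- Let d be even and P(s,t) = s^{d/2} t^{d/2}. Then there are constants c, δ₀ > 0 such that for all 0 < δ < δ₀, the Lebesgue measure of {(s,t) ∈ [−1,1]² : |P(s,t)| < δ} is at least c · δ^{2/d} · log(1/δ). Hence the logarithmic factor in the sublevel set estimate |{|P| < δ}| ≲ δ^{2/d} log(1/δ) for binary forms with all roots of multiplicity ≤ d/2 cannot be removed in general. -/
/-!
Put `a = δ^{2/d}`, so that `a^{d/2} = δ`. On the hyperbolic strip `a < s ≤ 1, |t| < a/s` one has
`|s t| < a`, hence `|P(s,t)| = |s t|^{d/2} < δ`; and the strip has area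
`∫_a^1 2a/s ds = 2a log(1/a) = (4/d) δ^{2/d} log(1/δ)`.
-/

open MeasureTheory Set

def sublevelSet (m : ℕ) (δ : ℝ) : Set (ℝ × ℝ) :=
  {p | p.1 ∈ Icc (-1 : ℝ) 1 ∧ p.2 ∈ Icc (-1 : ℝ) 1 ∧ |p.1 ^ m * p.2 ^ m| < δ}

def hyperbolicStrip (a : ℝ) : Set (ℝ × ℝ) :=
  regionBetween (fun s => -(a / s)) (fun s => a / s) (Ioc a 1)

lemma setIntegral_Ioc_inv {a b : ℝ} (ha : 0 < a) (hab : a ≤ b) :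
    ∫ s in Ioc a b, s⁻¹ = Real.log (b / a) := by
  rw [← intervalIntegral.integral_of_le hab, integral_inv_of_pos ha (ha.trans_le hab)]

lemma volume_hyperbolicStrip {a : ℝ} (ha : 0 < a) (ha1 : a ≤ 1) :
    volume (hyperbolicStrip a) = ENNReal.ofReal (2 * a * Real.log (1 / a)) := by
  have hcont : ContinuousOn (fun s => a / s) (Icc a 1) :=
    continuousOn_const.div continuousOn_id fun s hs => (ha.trans_le hs.1).ne'
  have hint : IntegrableOn (fun s => a / s) (Ioc a 1) :=
    hcont.integrableOn_Icc.mono_set Ioc_subset_Icc_self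
  rw [hyperbolicStrip, Measure.volume_eq_prod,
    volume_regionBetween_eq_integral (f := fun s => -(a / s)) hint.neg hint measurableSet_Ioc
      fun s hs => neg_le_self (div_pos ha (ha.trans hs.1)).le]
  congr 1
  calc ∫ s in Ioc a 1, ((fun s => a / s) - fun s => -(a / s)) s
      = ∫ s in Ioc a 1, 2 * a * s⁻¹ := setIntegral_congr_fun measurableSet_Ioc fun s _ => by
        simp only [Pi.sub_apply]; ring
    _ = 2 * a * Real.log (1 / a) := by rw [integral_const_mul, setIntegral_Ioc_inv ha ha1]

lemma hyperbolicStrip_subset_sublevelSet {a : ℝ} (ha : 0 < a) {m : ℕ} (hm : m ≠ 0) :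
    hyperbolicStrip a ⊆ sublevelSet m (a ^ m) := by
  rintro ⟨s, t⟩ ⟨⟨has, hs1⟩, hts, hst⟩
  have hs : 0 < s := ha.trans has
  have hst : s * |t| < a := by
    rw [← lt_div_iff₀' hs]
    exact abs_lt.2 ⟨hts, hst⟩
  have ht : |t| ≤ 1 := by nlinarith [abs_nonneg t]
  refine ⟨⟨by linarith, hs1⟩, abs_le.1 ht, ?_⟩
  rw [abs_mul, abs_pow, abs_pow, abs_of_pos hs, ← mul_pow]
  exact pow_lt_pow_left₀ hst (by positivity) hm

lemma le_volume_sublevelSet {m : ℕ} (hm : m ≠ 0) {δ : ℝ} (hδ : 0 < δ) (hδ1 : δ ≤ 1) :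
    ENNReal.ofReal (2 / m * δ ^ ((m : ℝ)⁻¹) * Real.log (1 / δ)) ≤ volume (sublevelSet m δ) := by
  set a := δ ^ ((m : ℝ)⁻¹)
  have ha : 0 < a := Real.rpow_pos_of_pos hδ _
  have ha1 : a ≤ 1 := Real.rpow_le_one hδ.le hδ1 (by positivity)
  have hlog : Real.log (1 / a) = (m : ℝ)⁻¹ * Real.log (1 / δ) := by
    rw [one_div, Real.log_inv, one_div, Real.log_inv, Real.log_rpow hδ, mul_neg]
  calc ENNReal.ofReal (2 / m * a * Real.log (1 / δ))
      = volume (hyperbolicStrip a) := by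
        rw [volume_hyperbolicStrip ha ha1, hlog]
        ring_nf
    _ ≤ volume (sublevelSet m (a ^ m)) :=
        measure_mono (hyperbolicStrip_subset_sublevelSet ha hm)
    _ = volume (sublevelSet m δ) := by rw [Real.rpow_inv_natCast_pow hδ.le hm]

/-- **Sharpness of the logarithmic factor.** For even `d ≥ 2` and
`P(s,t) = s^{d/2} t^{d/2}`, the sublevel set `{(s,t) ∈ [−1,1]² : |P(s,t)| < δ}` has measure
at least `c · δ^{2/d} · log(1/δ)` for all sufficiently small `δ > 0`. -/
theorem log_loss_sharp (d : ℕ) (hd : 0 < d) (he : Even d) :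
    ∃ c δ₀ : ℝ, 0 < c ∧ 0 < δ₀ ∧ ∀ δ : ℝ, 0 < δ → δ < δ₀ →
      ENNReal.ofReal (c * δ ^ ((2 : ℝ) / (d : ℝ)) * Real.log (1 / δ)) ≤
        volume {p : ℝ × ℝ | p.1 ∈ Set.Icc (-1 : ℝ) 1 ∧ p.2 ∈ Set.Icc (-1 : ℝ) 1 ∧
          |p.1 ^ (d / 2) * p.2 ^ (d / 2)| < δ} := by
  obtain ⟨m, rfl⟩ := he
  have hm : m ≠ 0 := by omega
  have hdm : (m + m) / 2 = m := by omega
  have hexp : (2 : ℝ) / ((m + m : ℕ) : ℝ) = (m : ℝ)⁻¹ := by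
    push_cast
    field_simp
    ring
  refine ⟨2 / m, 1, by positivity, one_pos, fun δ hδ hδ1 => ?_⟩
  rw [hexp, hdm]
  exact le_volume_sublevelSet hm hδ hδ1.le
end
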